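/- arXiv:1803.06445 — 3 statements merged into one kernel-verified Lean document; each statement's English description precedes it below -/
import Mathlib

section
/- The minority-based intersection on identified relations (tid-based definition) is non-monotone: there exist finite sets P, P', Q of (tid, value) pairs with P ⊆ P' such that P ∩_mb Q is not a subset of P' ∩_mb Q. Concretely, with P = {(1,a)}, P' = {(1,a),(3,a)}, Q = {(2,a)}, one has P ∩_mb Q = {(1,a)} but P' ∩_mb Q = {(2,a)}, so P ∩_mb Q ⊄ P' ∩_mb Q. -/
/-! Non-monotonicity arises already for relations carrying a single value: there the minority
intersection returns whichever relation has fewer tuples, so enlarging `P` past `Q` swaps the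
result from `P` to `Q`. -/

/-- Tid-based minority intersection on identified relations: for each value,
keep the tuples of the relation having the fewer duplicates of that value. -/
def tidMbInter {α : Type*} [DecidableEq α] (P Q : Finset (ℕ × α)) :
    Finset (ℕ × α) :=
  (P.filter fun p =>
      (P.filter fun q => q.2 = p.2).card ≤ (Q.filter fun q => q.2 = p.2).card) ∪
    (Q.filter fun p =>
      (Q.filter fun q => q.2 = p.2).card < (P.filter fun q => q.2 = p.2).card)

section SingleValue

variable {α : Type*} [DecidableEq α] {a : α} {P Q : Finset (ℕ × α)}

theorem filter_snd_eq_of_forall_snd_eq (hP : ∀ p ∈ P, p.2 = a) {b : α} (hb : b = a) :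
    (P.filter fun q => q.2 = b) = P :=
  Finset.filter_true_of_mem fun q hq => (hP q hq).trans hb.symm

theorem tidMbInter_of_forall_snd_eq (hP : ∀ p ∈ P, p.2 = a) (hQ : ∀ q ∈ Q, q.2 = a) :
    tidMbInter P Q = if P.card ≤ Q.card then P else Q := by
  have hPfilter : (P.filter fun p =>
      (P.filter fun q => q.2 = p.2).card ≤ (Q.filter fun q => q.2 = p.2).card) =
      P.filter fun _ => P.card ≤ Q.card :=
    Finset.filter_congr fun p hp => by
      rw [filter_snd_eq_of_forall_snd_eq hP (hP p hp), filter_snd_eq_of_forall_snd_eq hQ (hP p hp)]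
  have hQfilter : (Q.filter fun p =>
      (Q.filter fun q => q.2 = p.2).card < (P.filter fun q => q.2 = p.2).card) =
      Q.filter fun _ => Q.card < P.card :=
    Finset.filter_congr fun q hq => by
      rw [filter_snd_eq_of_forall_snd_eq hP (hQ q hq), filter_snd_eq_of_forall_snd_eq hQ (hQ q hq)]
  unfold tidMbInter
  rw [hPfilter, hQfilter]
  split_ifs with h
  · simp [h, not_lt.mpr h]
  · simp [not_le.mp h, h]

end SingleValue

/-- Non-monotonicity of the tid-based minority intersection: with
`P = {(1,a)} ⊆ P' = {(1,a),(3,a)}` and `Q = {(2,a)}`, we get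
`P ∩_mb Q = {(1,a)}` but `P' ∩_mb Q = {(2,a)}`, so `P ∩_mb Q ⊄ P' ∩_mb Q`. -/
theorem tidMbInter_not_monotone {α : Type*} [DecidableEq α] (a : α) :
    ({(1, a)} : Finset (ℕ × α)) ⊆ {(1, a), (3, a)} ∧
      tidMbInter ({(1, a)} : Finset (ℕ × α)) {(2, a)} = {(1, a)} ∧
      tidMbInter ({(1, a), (3, a)} : Finset (ℕ × α)) {(2, a)} = {(2, a)} ∧
      ¬ tidMbInter ({(1, a)} : Finset (ℕ × α)) {(2, a)} ⊆
          tidMbInter ({(1, a), (3, a)} : Finset (ℕ × α)) {(2, a)} := by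
  have hsmall : tidMbInter ({(1, a)} : Finset (ℕ × α)) {(2, a)} = {(1, a)} := by
    rw [tidMbInter_of_forall_snd_eq (a := a) (by simp) (by simp)]
    simp
  have hlarge : tidMbInter ({(1, a), (3, a)} : Finset (ℕ × α)) {(2, a)} = {(2, a)} := by
    rw [tidMbInter_of_forall_snd_eq (a := a) (by simp) (by simp)]
    simp
  refine ⟨by simp, hsmall, hlarge, ?_⟩
  rw [hsmall, hlarge]
  simp
end

section
/- Loop-cutting lemma: let Σ be a finite alphabet with |Σ| = K, and let L ⊆ List Σ be a set of words closed under cutting loops, i.e., whenever a word w = u ++ [x] ++ v ++ [x] ++ z is in L (the letter x occurs at two positions), the word u ++ [x] ++ z obtained by deleting the segment between the two occurrences (keeping one occurrence of x) is also in L. If L contains a word of length greater than 2K, then L contains a word whose length lies in the interval [K+1, 2K]. -/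
/-! Among the words of `L` longer than `2K` pick one, `w`, of minimal length. Its first `K + 1`
letters contain a repeated letter, so `w = u ++ [x] ++ v ++ [x] ++ z` with `v.length < K`.
Cutting this loop removes at most `K` letters, so the shorter word `u ++ [x] ++ z` of `L` is still
longer than `K`, and by minimality of `w` it is at most `2K` long. -/

namespace List

variable {α : Type*}

theorem exists_eq_append_of_not_nodup {l : List α} (h : ¬ l.Nodup) :
    ∃ (u v z : List α) (x : α), l = u ++ [x] ++ v ++ [x] ++ z := by
  induction l with
  | nil => exact absurd nodup_nil h
  | cons a l ih =>
    by_cases ha : a ∈ l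
    · obtain ⟨v, z, rfl⟩ := append_of_mem ha
      exact ⟨[], v, z, a, by simp⟩
    · obtain ⟨u, v, z, x, rfl⟩ := ih fun hl => h (nodup_cons.2 ⟨ha, hl⟩)
      exact ⟨a :: u, v, z, x, by simp⟩

theorem exists_eq_append_of_card_lt_length [Fintype α] {w : List α}
    (hw : Fintype.card α < w.length) :
    ∃ (u v z : List α) (x : α),
      w = u ++ [x] ++ v ++ [x] ++ z ∧ v.length < Fintype.card α := by
  have htake : (w.take (Fintype.card α + 1)).length = Fintype.card α + 1 := by
    rw [length_take]; omega
  have hdup : ¬ (w.take (Fintype.card α + 1)).Nodup := fun hnd => by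
    have := hnd.length_le_card
    omega
  obtain ⟨u, v, z, x, hdec⟩ := exists_eq_append_of_not_nodup hdup
  refine ⟨u, v, z ++ w.drop (Fintype.card α + 1), x, ?_, ?_⟩
  · calc w = w.take (Fintype.card α + 1) ++ w.drop (Fintype.card α + 1) :=
          (take_append_drop _ w).symm
      _ = _ := by rw [hdec]; simp
  · have := congrArg length hdec
    simp only [htake, length_append, length_singleton] at this
    omega

end List

/-- Loop-cutting lemma: over an alphabet of size `K`, if a set of words is
closed under cutting the segment between two occurrences of the same letter,
and it contains a word of length `> 2K`, then it contains a word whose length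
lies in `[K+1, 2K]`. -/
theorem loop_cutting {σ : Type*} [Fintype σ] (K : ℕ) (hK : Fintype.card σ = K)
    (L : Set (List σ))
    (hcut : ∀ (u v z : List σ) (x : σ),
      u ++ [x] ++ v ++ [x] ++ z ∈ L → u ++ [x] ++ z ∈ L)
    (hlong : ∃ w ∈ L, 2 * K < w.length) :
    ∃ w ∈ L, K + 1 ≤ w.length ∧ w.length ≤ 2 * K := by
  subst hK
  classical
  have hex : ∃ n, ∃ w ∈ L, w.length = n ∧ 2 * Fintype.card σ < n :=
    let ⟨w, hwL, hw⟩ := hlong; ⟨w.length, w, hwL, rfl, hw⟩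
  obtain ⟨w, hwL, hwmin, hw⟩ := Nat.find_spec hex
  obtain ⟨u, v, z, x, rfl, hv⟩ := List.exists_eq_append_of_card_lt_length (w := w) (by omega)
  have hcutL := hcut u v z x hwL
  have hlen : (u ++ [x] ++ z).length + (v.length + 1) = (u ++ [x] ++ v ++ [x] ++ z).length := by
    simp only [List.length_append, List.length_singleton]; omega
  refine ⟨u ++ [x] ++ z, hcutL, by omega, ?_⟩
  by_contra hshort
  exact Nat.find_min hex (m := (u ++ [x] ++ z).length) (by omega) ⟨_, hcutL, rfl, by omega⟩
end

section
/- Combining the pigeonhole and loop-pumping lemmas: let Σ be a finite alphabet with |Σ| = K and let L ⊆ List Σ be nonempty and closed under duplicating loops (as above). Then either every word in L has length at most K, in which case L is finite (of cardinality at most K^0 + K^1 + ... + K^K), or L contains a word of length greater than K, in which case L is infinite. -/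
/-!
A word longer than the alphabet repeats a letter, so it has the shape `u x v x z`. Duplicating
the loop `x v` again and again, i.e. iterating `v ↦ v x v`, produces words of strictly increasing
length that all stay in `L`, so `L` is infinite. If instead no word is longer than `K`, then `L`
lies among the `∑_{i ≤ K} K^i` words of length at most `K`.
-/

namespace List

variable {α : Type*}

def ClosedUnderLoopDuplication (L : Set (List α)) : Prop :=
  ∀ (u v z : List α) (x : α), u ++ [x] ++ v ++ [x] ++ z ∈ L →
    u ++ [x] ++ v ++ [x] ++ v ++ [x] ++ z ∈ L

theorem exists_loop_of_not_nodup {w : List α} (h : ¬w.Nodup) :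
    ∃ (u v z : List α) (x : α), w = u ++ [x] ++ v ++ [x] ++ z := by
  induction w with
  | nil => exact absurd nodup_nil h
  | cons a w ih =>
    rw [nodup_cons, not_and_or, not_not] at h
    rcases h with ha | hw
    · obtain ⟨v, z, rfl⟩ := append_of_mem ha
      exact ⟨[], v, z, a, by simp⟩
    · obtain ⟨u, v, z, x, rfl⟩ := ih hw
      exact ⟨a :: u, v, z, x, by simp⟩

theorem exists_loop_of_card_lt_length [Fintype α] {w : List α}
    (h : Fintype.card α < w.length) :
    ∃ (u v z : List α) (x : α), w = u ++ [x] ++ v ++ [x] ++ z :=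
  exists_loop_of_not_nodup fun hw => h.not_ge hw.length_le_card

theorem ClosedUnderLoopDuplication.mem_iterate {L : Set (List α)}
    (hL : ClosedUnderLoopDuplication L)
    {u v z : List α} {x : α} (hw : u ++ [x] ++ v ++ [x] ++ z ∈ L) (n : ℕ) :
    u ++ [x] ++ (fun v => v ++ [x] ++ v)^[n] v ++ [x] ++ z ∈ L := by
  induction n with
  | zero => exact hw
  | succ n ih =>
    rw [Function.iterate_succ_apply']
    simpa only [append_assoc] using hL _ _ _ _ ih

theorem ClosedUnderLoopDuplication.infinite {L : Set (List α)}
    (hL : ClosedUnderLoopDuplication L)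
    {u v z : List α} {x : α} (hw : u ++ [x] ++ v ++ [x] ++ z ∈ L) : L.Infinite := by
  have hmono : StrictMono fun n => ((fun v => v ++ [x] ++ v)^[n] v).length :=
    strictMono_nat_of_lt_succ fun n => by
      simp only [Function.iterate_succ_apply', length_append, length_singleton]
      omega
  refine Set.infinite_of_injective_forall_mem (fun m n hmn => hmono.injective ?_)
    (hL.mem_iterate hw)
  simpa using congrArg length hmn

theorem card_le_sum_pow_of_length_le [Fintype α] {s : Finset (List α)} {n : ℕ}
    (h : ∀ w ∈ s, w.length ≤ n) :
    s.card ≤ ∑ i ∈ Finset.range (n + 1), Fintype.card α ^ i := by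
  classical
  let words (i : ℕ) : Finset (List α) := Finset.univ.image (Vector.toList (n := i))
  have hsub : s ⊆ (Finset.range (n + 1)).biUnion words := fun w hw =>
    Finset.mem_biUnion.mpr ⟨w.length, Finset.mem_range_succ_iff.mpr (h w hw),
      Finset.mem_image.mpr ⟨⟨w, rfl⟩, Finset.mem_univ _, rfl⟩⟩
  calc s.card ≤ ((Finset.range (n + 1)).biUnion words).card := Finset.card_le_card hsub
    _ ≤ ∑ i ∈ Finset.range (n + 1), (words i).card := Finset.card_biUnion_le
    _ ≤ ∑ i ∈ Finset.range (n + 1), Fintype.card α ^ i := Finset.sum_le_sum fun i _ =>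
      Finset.card_image_le.trans_eq (by rw [Finset.card_univ, card_vector])

end List

theorem finiteness_dichotomy_general {σ : Type*} [Fintype σ] (K : ℕ)
    (hK : Fintype.card σ = K) (L : Set (List σ))
    (hdup : ∀ (u v z : List σ) (x : σ),
      u ++ [x] ++ v ++ [x] ++ z ∈ L →
        u ++ [x] ++ v ++ [x] ++ v ++ [x] ++ z ∈ L) :
    ((∀ w ∈ L, w.length ≤ K) ∧
        ∃ hf : L.Finite, hf.toFinset.card ≤ ∑ i ∈ Finset.range (K + 1), K ^ i) ∨
      ((∃ w ∈ L, K < w.length) ∧ L.Infinite) := by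
  subst hK
  by_cases hshort : ∀ w ∈ L, w.length ≤ Fintype.card σ
  · have hf : L.Finite := (List.finite_length_le σ _).subset hshort
    exact .inl ⟨hshort, hf, List.card_le_sum_pow_of_length_le fun w hw =>
      hshort w (hf.mem_toFinset.mp hw)⟩
  · push Not at hshort
    obtain ⟨w, hwL, hlong⟩ := hshort
    obtain ⟨u, v, z, x, rfl⟩ := List.exists_loop_of_card_lt_length hlong
    exact .inr ⟨⟨_, hwL, hlong⟩, List.ClosedUnderLoopDuplication.infinite hdup hwL⟩

/-- Dichotomy for sets of words closed under duplicating loops over a finite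
alphabet of size `K`: either all words have length at most `K` and the set is
finite (of cardinality at most `∑_{i=0}^{K} K^i`), or the set contains a word of
length `> K` and is infinite. -/
theorem finiteness_dichotomy {σ : Type*} [Fintype σ] (K : ℕ)
    (hK : Fintype.card σ = K) (L : Set (List σ)) (hne : L.Nonempty)
    (hdup : ∀ (u v z : List σ) (x : σ),
      u ++ [x] ++ v ++ [x] ++ z ∈ L →
        u ++ [x] ++ v ++ [x] ++ v ++ [x] ++ z ∈ L) :
    ((∀ w ∈ L, w.length ≤ K) ∧
        ∃ hf : L.Finite, hf.toFinset.card ≤ ∑ i ∈ Finset.range (K + 1), K ^ i) ∨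
      ((∃ w ∈ L, K < w.length) ∧ L.Infinite) :=
  finiteness_dichotomy_general K hK L hdup
end
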